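/- arXiv:1704.07686 — 3 statements merged into one kernel-verified Lean document; each statement's English description precedes it below -/
import Mathlib

section
/- For all integers n ≥ 0, k ≥ 0, m with −1 ≤ m ≤ n+1, and l with 0 ≤ l ≤ k, the Lie bracket of the vector fields A(m,n) and B(l,k) satisfies [A(m,n), B(l,k)] = ((k+2)/(k+n+2))·( l − k·(m+1)/(n+2) )·B(m+l, n+k) − n·A(m+l, n+k). (Part of Lemma 2.1.) -/
/-- Monomial `x^a * y^b` for integer exponents, zero if an exponent is negative. -/
noncomputable def M (a b : ℤ) : ℝ × ℝ → ℝ :=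
  fun p => if 0 ≤ a ∧ 0 ≤ b then p.1 ^ a.toNat * p.2 ^ b.toNat else 0

/-- The vector field `A(l,k)`. -/
noncomputable def A (l k : ℤ) : ℝ × ℝ → ℝ × ℝ :=
  fun p => (((k : ℝ) - (l : ℝ) + 1) / ((k : ℝ) + 2) * M (l + 1) (k - l) p,
            -(((l : ℝ) + 1) / ((k : ℝ) + 2)) * M l (k - l + 1) p)

/-- The vector field `B(l,k)`. -/
noncomputable def B (l k : ℤ) : ℝ × ℝ → ℝ × ℝ :=
  fun p => (M (l + 1) (k - l) p, M l (k - l + 1) p)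

/-- The scalar monomial function `Z(l,k)`. -/
noncomputable def Z (l k : ℤ) : ℝ × ℝ → ℝ := M l (k - l)

/-- Lie bracket of planar vector fields: `[X,Y](p) = DY(p)(X(p)) - DX(p)(Y(p))`. -/
noncomputable def lieBracket (X Y : ℝ × ℝ → ℝ × ℝ) : ℝ × ℝ → ℝ × ℝ :=
  fun p => fderiv ℝ Y p (X p) - fderiv ℝ X p (Y p)

/-!
Both `A(m,n)` and `B(l,k)` are fields of the shape `(c₁ x^(a+1) y^b, c₂ x^a y^(b+1))`, and this
family is closed under the bracket: differentiating a monomial `x^s y^t` along such a field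
multiplies it by `s c₁ + t c₂` and shifts its exponents by `(a, b)`, as in Euler's identity. The
right-hand side lies in the same family with the same exponents, so the theorem reduces to two
identities between rational coefficients. Since `M` sends monomials with a negative exponent to `0`,
the computation is valid only when every such monomial carries a zero coefficient; for `A(m,n)`
this is what `-1 ≤ m ≤ n + 1` guarantees.
-/

section Monomial

variable {a b : ℤ}

lemma M_natCast (a b : ℕ) : M a b = fun p => p.1 ^ a * p.2 ^ b := by
  funext p; simp [M]

lemma M_eq_zero (h : ¬(0 ≤ a ∧ 0 ≤ b)) (p : ℝ × ℝ) : M a b p = 0 := if_neg h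

lemma natCast_mul_M_sub_one_left (a b : ℕ) (p : ℝ × ℝ) :
    (a : ℝ) * M (a - 1) b p = a * (p.1 ^ (a - 1) * p.2 ^ b) := by
  cases a <;> simp [M]

lemma natCast_mul_M_sub_one_right (a b : ℕ) (p : ℝ × ℝ) :
    (b : ℝ) * M a (b - 1) p = b * (p.1 ^ a * p.2 ^ (b - 1)) := by
  cases b <;> simp [M]

lemma hasFDerivAt_M (a b : ℤ) (p : ℝ × ℝ) :
    HasFDerivAt (M a b) ((a * M (a - 1) b p) • ContinuousLinearMap.fst ℝ ℝ ℝ +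
      (b * M a (b - 1) p) • ContinuousLinearMap.snd ℝ ℝ ℝ) p := by
  by_cases h : 0 ≤ a ∧ 0 ≤ b
  · lift a to ℕ using h.1
    lift b to ℕ using h.2
    have hx : HasFDerivAt (fun q : ℝ × ℝ => q.1 ^ a)
        ((a * p.1 ^ (a - 1)) • ContinuousLinearMap.fst ℝ ℝ ℝ) p :=
      (hasDerivAt_pow a p.1).comp_hasFDerivAt p hasFDerivAt_fst
    have hy : HasFDerivAt (fun q : ℝ × ℝ => q.2 ^ b)
        ((b * p.2 ^ (b - 1)) • ContinuousLinearMap.snd ℝ ℝ ℝ) p :=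
      (hasDerivAt_pow b p.2).comp_hasFDerivAt p hasFDerivAt_snd
    rw [M_natCast]
    refine (hx.mul hy).congr_fderiv ?_
    ext <;> simp [natCast_mul_M_sub_one_left, natCast_mul_M_sub_one_right] <;> ring
  · have h₀ : M a b = fun _ => 0 := funext (M_eq_zero h)
    rw [h₀, M_eq_zero (by omega), M_eq_zero (by omega)]
    simpa using hasFDerivAt_const (0 : ℝ) p

lemma fderiv_M_apply (a b : ℤ) (p w : ℝ × ℝ) :
    fderiv ℝ (M a b) p w = a * M (a - 1) b p * w.1 + b * M a (b - 1) p * w.2 := by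
  simp [(hasFDerivAt_M a b p).fderiv]

end Monomial

def IsPolynomialTerm (c : ℝ) (a b : ℤ) : Prop := c = 0 ∨ 0 ≤ a ∧ 0 ≤ b

namespace IsPolynomialTerm

variable {c c' : ℝ} {a b a' b' s t : ℤ}

lemma mul_M_mul_M (h : IsPolynomialTerm c a b) (h' : IsPolynomialTerm c' a' b')
    (hs : a + a' = s) (ht : b + b' = t) (p : ℝ × ℝ) :
    c * M a b p * (c' * M a' b' p) = c * c' * M s t p := by
  rcases h with rfl | ⟨ha, hb⟩
  · simp
  rcases h' with rfl | ⟨ha', hb'⟩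
  · simp
  lift a to ℕ using ha
  lift b to ℕ using hb
  lift a' to ℕ using ha'
  lift b' to ℕ using hb'
  subst hs ht
  simp only [← Nat.cast_add, M_natCast]
  ring

lemma mul_sub_one_left (h : IsPolynomialTerm c a b) : IsPolynomialTerm (c * a) (a - 1) b := by
  rcases h with rfl | ⟨ha, hb⟩
  · simp [IsPolynomialTerm]
  rcases ha.eq_or_lt with rfl | ha
  · simp [IsPolynomialTerm]
  · exact Or.inr ⟨by omega, hb⟩

lemma mul_sub_one_right (h : IsPolynomialTerm c a b) : IsPolynomialTerm (c * b) a (b - 1) := by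
  rcases h with rfl | ⟨ha, hb⟩
  · simp [IsPolynomialTerm]
  rcases hb.eq_or_lt with rfl | hb
  · simp [IsPolynomialTerm]
  · exact Or.inr ⟨ha, by omega⟩

end IsPolynomialTerm

noncomputable def monomialField (c₁ c₂ : ℝ) (a b : ℤ) : ℝ × ℝ → ℝ × ℝ :=
  fun p => (c₁ * M (a + 1) b p, c₂ * M a (b + 1) p)

def IsPolynomialField (c₁ c₂ : ℝ) (a b : ℤ) : Prop :=
  IsPolynomialTerm c₁ (a + 1) b ∧ IsPolynomialTerm c₂ a (b + 1)

section MonomialField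

variable {c₁ c₂ d₁ d₂ c : ℝ} {a b u v s t : ℤ}

lemma fderiv_monomialField_apply (p w : ℝ × ℝ) :
    fderiv ℝ (monomialField c₁ c₂ a b) p w =
      (c₁ * fderiv ℝ (M (a + 1) b) p w, c₂ * fderiv ℝ (M a (b + 1)) p w) := by
  have hD := ((hasFDerivAt_M (a + 1) b p).const_mul c₁).prodMk
    ((hasFDerivAt_M a (b + 1) p).const_mul c₂)
  rw [show monomialField c₁ c₂ a b = fun q => (c₁ * M (a + 1) b q, c₂ * M a (b + 1) q) from rfl,
    hD.fderiv, (hasFDerivAt_M (a + 1) b p).fderiv, (hasFDerivAt_M a (b + 1) p).fderiv]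
  simp [mul_add]

lemma mul_fderiv_M_apply_monomialField (hst : IsPolynomialTerm c s t)
    (hX : IsPolynomialField c₁ c₂ a b) (p : ℝ × ℝ) :
    c * fderiv ℝ (M s t) p (monomialField c₁ c₂ a b p) =
      c * (s * c₁ + t * c₂) * M (s + a) (t + b) p := by
  have e₁ := hst.mul_sub_one_left.mul_M_mul_M hX.1 (show s - 1 + (a + 1) = s + a by ring) rfl p
  have e₂ := hst.mul_sub_one_right.mul_M_mul_M hX.2 rfl (show t - 1 + (b + 1) = t + b by ring) p
  rw [fderiv_M_apply]
  simp only [monomialField]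
  linear_combination e₁ + e₂

theorem lieBracket_monomialField (hX : IsPolynomialField c₁ c₂ a b)
    (hY : IsPolynomialField d₁ d₂ u v) :
    lieBracket (monomialField c₁ c₂ a b) (monomialField d₁ d₂ u v) =
      monomialField (d₁ * ((u + 1) * c₁ + v * c₂) - c₁ * ((a + 1) * d₁ + b * d₂))
        (d₂ * (u * c₁ + (v + 1) * c₂) - c₂ * (a * d₁ + (b + 1) * d₂)) (a + u) (b + v) := by
  funext p
  simp only [lieBracket, fderiv_monomialField_apply, mul_fderiv_M_apply_monomialField hY.1 hX,
    mul_fderiv_M_apply_monomialField hY.2 hX, mul_fderiv_M_apply_monomialField hX.1 hY,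
    mul_fderiv_M_apply_monomialField hX.2 hY]
  rw [show u + 1 + a = a + u + 1 by ring, show a + 1 + u = a + u + 1 by ring,
    show v + 1 + b = b + v + 1 by ring, show b + 1 + v = b + v + 1 by ring,
    add_comm v b, add_comm u a]
  simp only [monomialField, Prod.mk_sub_mk, Int.cast_add, Int.cast_one]
  congr 1 <;> ring

end MonomialField

lemma A_eq_monomialField (m n : ℤ) :
    A m n = monomialField ((n - m + 1) / (n + 2)) (-((m + 1) / (n + 2))) m (n - m) := rfl

lemma B_eq_monomialField (l k : ℤ) : B l k = monomialField 1 1 l (k - l) := by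
  funext p; simp [B, monomialField]

lemma isPolynomialField_A {m n : ℤ} (hm : -1 ≤ m) (hmn : m ≤ n + 1) :
    IsPolynomialField ((n - m + 1) / (n + 2)) (-((m + 1) / (n + 2))) m (n - m) := by
  constructor
  · rcases hmn.eq_or_lt with rfl | hmn
    · left; push_cast; ring
    · right; omega
  · rcases hm.eq_or_lt with rfl | hm
    · left; push_cast; ring
    · right; omega

lemma isPolynomialField_B {l k : ℤ} (hl : 0 ≤ l) (hlk : l ≤ k) :
    IsPolynomialField 1 1 l (k - l) :=
  ⟨Or.inr ⟨by omega, by omega⟩, Or.inr ⟨hl, by omega⟩⟩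

lemma smul_monomialField_sub_smul_monomialField (r r' c₁ c₂ d₁ d₂ : ℝ) (a b : ℤ) (p : ℝ × ℝ) :
    r • monomialField c₁ c₂ a b p - r' • monomialField d₁ d₂ a b p =
      monomialField (r * c₁ - r' * d₁) (r * c₂ - r' * d₂) a b p := by
  simp only [monomialField, Prod.smul_mk, Prod.mk_sub_mk, smul_eq_mul]
  congr 1 <;> ring

/-- `[A(m,n), B(l,k)] = ((k+2)/(k+n+2))(l - k(m+1)/(n+2)) • B(m+l,n+k) - n • A(m+l,n+k)`. -/
theorem stmt3 (n k m l : ℤ) (hn : 0 ≤ n) (hk : 0 ≤ k) (hm : -1 ≤ m) (hmn : m ≤ n + 1)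
    (hl0 : 0 ≤ l) (hlk : l ≤ k) :
    lieBracket (A m n) (B l k) =
      fun p => ((((k : ℝ) + 2) / ((k : ℝ) + (n : ℝ) + 2)) *
            ((l : ℝ) - (k : ℝ) * ((m : ℝ) + 1) / ((n : ℝ) + 2))) • B (m + l) (n + k) p
          - (n : ℝ) • A (m + l) (n + k) p := by
  rw [A_eq_monomialField, B_eq_monomialField,
    lieBracket_monomialField (isPolynomialField_A hm hmn) (isPolynomialField_B hl0 hlk)]
  funext p
  rw [B_eq_monomialField, A_eq_monomialField, smul_monomialField_sub_smul_monomialField,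
    show n - m + (k - l) = n + k - (m + l) by ring]
  have hn₂ : (n : ℝ) + 2 ≠ 0 := by positivity
  have hnk₂ : (k : ℝ) + n + 2 ≠ 0 := by positivity
  congr 1 <;> push_cast <;> field_simp <;> ring
end

section
/- Let r ≥ 1 be an integer, a_r a real number, and l ≥ 0, n ≥ 0 integers with 2l ≤ n. Set c_l := (2l−1)^{l−1}_{−2} for l ≥ 1 and c_0 := 1. Then Z(2l, n)·𝔸_r + [𝒵(2l, n), 𝔸_r] = [ a_r^{l+1} · (n + r(l+1) + 2) · c_l / ( (n−2l+1)^{l+1}_{r+2} ) ] · A(−1, n+r(l+1)), where · denotes the action of a scalar function on a vector field by pointwise multiplication and [·,·] is the Lie bracket of vector fields. (Even case of the lemma on time-rescaling generators.) -/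
/-- Pochhammer-type product `(a)^n_b = a (a+b) (a+2b) ⋯ (a+(n-1)b)`. -/
noncomputable def poch (a b : ℝ) (n : ℕ) : ℝ := ∏ j ∈ Finset.range n, (a + (j : ℝ) * b)

/-- The vector field `𝔸_r = A(1,0) + a_r • A(-1,r)`, i.e. `(a_r y^{r+1}, -x)`. -/
noncomputable def bbA (r : ℤ) (ar : ℝ) : ℝ × ℝ → ℝ × ℝ :=
  fun p => A 1 0 p + ar • A (-1) r p

/-- The transformation generator `𝒵(m,n)`. -/
noncomputable def calZ (r : ℤ) (ar : ℝ) (m n : ℤ) : ℝ × ℝ → ℝ × ℝ :=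
  fun p => (1 / ((m : ℝ) - (n : ℝ) - 1)) • A m n p + (1 / ((n : ℝ) + 2)) • B m n p
    - ∑ i ∈ Finset.range (((m + 1) / 2).toNat),
        (ar ^ (i + 1) * ((n : ℝ) + (r : ℝ) * ((i : ℝ) + 1) + 2) *
            poch ((m : ℝ) - 1) (-2) i /
          poch ((n : ℝ) - (m : ℝ) + 1) ((r : ℝ) + 2) (i + 2)) •
        A (m - 2 * ((i : ℤ) + 1)) (n + r * ((i : ℤ) + 1)) p

set_option maxHeartbeats 2000000

noncomputable def DM (a b : ℤ) (p : ℝ × ℝ) : ℝ × ℝ →L[ℝ] ℝ :=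
  ((a : ℝ) * M (a - 1) b p) • ContinuousLinearMap.fst ℝ ℝ ℝ
    + ((b : ℝ) * M a (b - 1) p) • ContinuousLinearMap.snd ℝ ℝ ℝ

lemma DM_apply (a b : ℤ) (p v : ℝ × ℝ) :
    DM a b p v = (a : ℝ) * M (a - 1) b p * v.1 + (b : ℝ) * M a (b - 1) p * v.2 := by
  simp [DM, mul_assoc]

lemma hasFDerivAt_pow_fst (k : ℕ) (p : ℝ × ℝ) :
    HasFDerivAt (fun q : ℝ × ℝ => q.1 ^ k)
      (((k : ℝ) * p.1 ^ (k - 1)) • ContinuousLinearMap.fst ℝ ℝ ℝ) p := by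
  induction k with
  | zero => simpa using hasFDerivAt_const (1 : ℝ) p
  | succ k ih =>
      have h := ih.fun_mul (hasFDerivAt_fst (𝕜 := ℝ) (p := p))
      have : (fun q : ℝ × ℝ => q.1 ^ k * q.1) = fun q : ℝ × ℝ => q.1 ^ (k + 1) := by
        funext q; ring
      rw [this] at h
      refine h.congr_fderiv (Eq.symm ?_)
      rw [smul_smul]
      rw [← add_smul]
      congr 1
      rcases k with _ | j
      · simp
      · push_cast
        ring

lemma hasFDerivAt_pow_snd (k : ℕ) (p : ℝ × ℝ) :
    HasFDerivAt (fun q : ℝ × ℝ => q.2 ^ k)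
      (((k : ℝ) * p.2 ^ (k - 1)) • ContinuousLinearMap.snd ℝ ℝ ℝ) p := by
  induction k with
  | zero => simpa using hasFDerivAt_const (1 : ℝ) p
  | succ k ih =>
      have h := ih.fun_mul (hasFDerivAt_snd (𝕜 := ℝ) (p := p))
      have : (fun q : ℝ × ℝ => q.2 ^ k * q.2) = fun q : ℝ × ℝ => q.2 ^ (k + 1) := by
        funext q; ring
      rw [this] at h
      refine h.congr_fderiv (Eq.symm ?_)
      rw [smul_smul, ← add_smul]
      congr 1
      rcases k with _ | j
      · simp
      · push_cast
        ring

lemma hasFDerivAt_M_s9 (a b : ℤ) (p : ℝ × ℝ) : HasFDerivAt (M a b) (DM a b p) p := by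
  by_cases h : 0 ≤ a ∧ 0 ≤ b
  · obtain ⟨ha, hb⟩ := h
    have hM : M a b = fun q : ℝ × ℝ => q.1 ^ a.toNat * q.2 ^ b.toNat := by
      funext q; simp [M, ha, hb]
    rw [hM]
    have h := (hasFDerivAt_pow_fst a.toNat p).fun_mul (hasFDerivAt_pow_snd b.toNat p)
    refine h.congr_fderiv (Eq.symm ?_)
    have e1 : (a : ℝ) * M (a - 1) b p =
        p.2 ^ b.toNat * ((a.toNat : ℝ) * p.1 ^ (a.toNat - 1)) := by
      rcases eq_or_lt_of_le ha with h0 | h0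
      · simp [M, ← h0]
      · have : 0 ≤ a - 1 := by omega
        have hb' : 0 ≤ b := hb
        rw [M, if_pos ⟨this, hb'⟩]
        have : (a - 1).toNat = a.toNat - 1 := by omega
        rw [this]
        have : (a : ℝ) = (a.toNat : ℝ) := by
          exact_mod_cast congrArg (Int.cast : ℤ → ℝ) (Int.toNat_of_nonneg ha).symm
        rw [this]; ring
    have e2 : (b : ℝ) * M a (b - 1) p =
        p.1 ^ a.toNat * ((b.toNat : ℝ) * p.2 ^ (b.toNat - 1)) := by
      rcases eq_or_lt_of_le hb with h0 | h0
      · simp [M, ← h0]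
      · have hb1 : 0 ≤ b - 1 := by omega
        rw [M, if_pos ⟨ha, hb1⟩]
        have : (b - 1).toNat = b.toNat - 1 := by omega
        rw [this]
        have : (b : ℝ) = (b.toNat : ℝ) := by
          exact_mod_cast congrArg (Int.cast : ℤ → ℝ) (Int.toNat_of_nonneg hb).symm
        rw [this]; ring
    rw [DM, e1, e2, smul_smul, smul_smul]
    abel
  · have h0 : M a b = fun _ => (0 : ℝ) := by
      funext q; simp [M, h]
    have hc1 : (a : ℝ) * M (a - 1) b p = 0 := by
      rcases not_and_or.mp h with h' | h'
      · rw [M, if_neg (by omega)]; ring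
      · rw [M, if_neg (by omega)]; ring
    have hc2 : (b : ℝ) * M a (b - 1) p = 0 := by
      rcases not_and_or.mp h with h' | h'
      · rw [M, if_neg (by omega)]; ring
      · rw [M, if_neg (by omega)]; ring
    rw [h0, DM, hc1, hc2]
    simpa using hasFDerivAt_const (0 : ℝ) p
noncomputable def DA (l k : ℤ) (p : ℝ × ℝ) : ℝ × ℝ →L[ℝ] ℝ × ℝ :=
  ((((k : ℝ) - (l : ℝ) + 1) / ((k : ℝ) + 2)) • DM (l + 1) (k - l) p).prod
    ((-(((l : ℝ) + 1) / ((k : ℝ) + 2))) • DM l (k - l + 1) p)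

noncomputable def DB (l k : ℤ) (p : ℝ × ℝ) : ℝ × ℝ →L[ℝ] ℝ × ℝ :=
  (DM (l + 1) (k - l) p).prod (DM l (k - l + 1) p)

lemma hasFDerivAt_A (l k : ℤ) (p : ℝ × ℝ) : HasFDerivAt (A l k) (DA l k p) p :=
  HasFDerivAt.prodMk ((hasFDerivAt_M_s9 (l + 1) (k - l) p).const_mul _)
    ((hasFDerivAt_M_s9 l (k - l + 1) p).const_mul _)

lemma hasFDerivAt_B (l k : ℤ) (p : ℝ × ℝ) : HasFDerivAt (B l k) (DB l k p) p := by
  have h := HasFDerivAt.prodMk (hasFDerivAt_M_s9 (l + 1) (k - l) p) (hasFDerivAt_M_s9 l (k - l + 1) p)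
  exact h

lemma hasFDerivAt_bbA (r : ℤ) (ar : ℝ) (p : ℝ × ℝ) :
    HasFDerivAt (bbA r ar) (DA 1 0 p + ar • DA (-1) r p) p :=
  (hasFDerivAt_A 1 0 p).add ((hasFDerivAt_A (-1) r p).const_smul ar)

lemma hasFDerivAt_calZ (r : ℤ) (ar : ℝ) (m n : ℤ) (p : ℝ × ℝ) :
    HasFDerivAt (calZ r ar m n)
      ((1 / ((m : ℝ) - (n : ℝ) - 1)) • DA m n p + (1 / ((n : ℝ) + 2)) • DB m n p
        - ∑ i ∈ Finset.range (((m + 1) / 2).toNat),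
            (ar ^ (i + 1) * ((n : ℝ) + (r : ℝ) * ((i : ℝ) + 1) + 2) *
                poch ((m : ℝ) - 1) (-2) i /
              poch ((n : ℝ) - (m : ℝ) + 1) ((r : ℝ) + 2) (i + 2)) •
            DA (m - 2 * ((i : ℤ) + 1)) (n + r * ((i : ℤ) + 1)) p) p := by
  refine HasFDerivAt.sub ?_ ?_
  · exact ((hasFDerivAt_A m n p).fun_const_smul _).fun_add ((hasFDerivAt_B m n p).fun_const_smul _)
  · exact HasFDerivAt.fun_sum fun i _ => (hasFDerivAt_A _ _ p).fun_const_smul _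

lemma M_mul_x (a b : ℤ) (ha : 0 ≤ a) (p : ℝ × ℝ) : M 1 0 p * M a b p = M (a + 1) b p := by
  by_cases hb : 0 ≤ b
  · rw [M, M, M, if_pos ⟨by omega, by omega⟩, if_pos ⟨ha, hb⟩, if_pos ⟨by omega, hb⟩]
    rw [show (a + 1).toNat = a.toNat + 1 by omega]
    simp [pow_succ]; ring
  · have h1 : M a b p = 0 := by rw [M]; exact if_neg fun h => hb h.2
    have h2 : M (a + 1) b p = 0 := by rw [M]; exact if_neg fun h => hb h.2
    rw [h1, h2, mul_zero]

lemma M_mul_y (c a b : ℤ) (hb : 0 ≤ b) (hc : 0 ≤ c) (p : ℝ × ℝ) :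
    M 0 c p * M a b p = M a (b + c) p := by
  by_cases ha : 0 ≤ a
  · rw [M, M, M, if_pos ⟨le_refl 0, hc⟩, if_pos ⟨ha, hb⟩, if_pos ⟨ha, by omega⟩]
    rw [show (b + c).toNat = b.toNat + c.toNat by omega]
    simp [pow_add]; ring
  · have h1 : M a b p = 0 := by rw [M]; exact if_neg fun h => ha h.1
    have h2 : M a (b + c) p = 0 := by rw [M]; exact if_neg fun h => ha h.1
    rw [h1, h2, mul_zero]

lemma M_neg_left (a b : ℤ) (h : a < 0) (p : ℝ × ℝ) : M a b p = 0 := by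
  rw [M]; exact if_neg fun hh => by omega

lemma M_neg_right (a b : ℤ) (h : b < 0) (p : ℝ × ℝ) : M a b p = 0 := by
  rw [M]; exact if_neg fun hh => by omega

lemma M_zero_zero (p : ℝ × ℝ) : M 0 0 p = 1 := by simp [M]

lemma M_congr (a b a' b' : ℤ) (h1 : a = a') (h2 : b = b') (p : ℝ × ℝ) : M a b p = M a' b' p := by
  rw [h1, h2]

lemma poch_zero (a b : ℝ) : poch a b 0 = 1 := by simp [poch]

lemma poch_one (a b : ℝ) : poch a b 1 = a := by simp [poch]

lemma poch_succ (a b : ℝ) (k : ℕ) : poch a b (k + 1) = poch a b k * (a + (k : ℝ) * b) := by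
  rw [poch, poch, Finset.prod_range_succ]

lemma poch_pos (a b : ℝ) (ha : 0 < a) (hb : 0 ≤ b) (n : ℕ) : 0 < poch a b n :=
  Finset.prod_pos fun j _ => by positivity

/-- Even case of the time-rescaling lemma. Here `c_l = (2l-1)^{l-1}_{-2}` for `l ≥ 1`
and `c_0 = 1`; note that with natural subtraction `poch (2l-1) (-2) (l-1)` equals `1`
when `l = 0`, as required. -/
theorem stmt9 (r n : ℤ) (ar : ℝ) (l : ℕ) (hr : 1 ≤ r) (hn : 0 ≤ n)
    (hln : 2 * (l : ℤ) ≤ n) :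
    (fun p => Z (2 * (l : ℤ)) n p • bbA r ar p
        + lieBracket (calZ r ar (2 * (l : ℤ)) n) (bbA r ar) p)
      = fun p =>
        (ar ^ (l + 1) * ((n : ℝ) + (r : ℝ) * ((l : ℝ) + 1) + 2) *
            (if 1 ≤ l then poch (2 * (l : ℝ) - 1) (-2) (l - 1) else 1) /
          poch ((n : ℝ) - 2 * (l : ℝ) + 1) ((r : ℝ) + 2) (l + 1)) •
        A (-1) (n + r * ((l : ℤ) + 1)) p := by
  funext p
  have hrR : (1:ℝ) ≤ (r:ℝ) := by exact_mod_cast hr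
  have hnR : (0:ℝ) ≤ (n:ℝ) := by exact_mod_cast hn
  have hlnR : 2 * (l:ℝ) ≤ (n:ℝ) := by exact_mod_cast hln
  have hlR : (0:ℝ) ≤ (l:ℝ) := by positivity
  have hne1 : ((n:ℝ) + 2) ≠ 0 := by nlinarith
  have hne2 : (2 * (l:ℝ) - (n:ℝ) - 1) ≠ 0 := by nlinarith
  have hne3 : ((r:ℝ) + 2) ≠ 0 := by nlinarith
  have hne4 : ((n:ℝ) - 2 * (l:ℝ) + 1) ≠ 0 := by nlinarith
  have hQ : ∀ j : ℕ, poch ((n:ℝ) - 2 * (l:ℝ) + 1) ((r:ℝ) + 2) j ≠ 0 := fun j =>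
    ne_of_gt (poch_pos _ _ (by nlinarith) (by nlinarith) j)
  have hw : ∀ j : ℕ, ((n:ℝ) + (r:ℝ) * ((j:ℝ) + 1) + 2) ≠ 0 := fun j => by
    have : (0:ℝ) ≤ (j:ℝ) := by positivity
    nlinarith
  have hfac : ∀ j : ℕ, ((n:ℝ) - 2 * (l:ℝ) + 1 + ((j:ℝ) + 1) * ((r:ℝ) + 2)) ≠ 0 := fun j => by
    have : (0:ℝ) ≤ (j:ℝ) := by positivity
    nlinarith
  have hbb := (hasFDerivAt_bbA r ar p).fderiv
  have hcz := (hasFDerivAt_calZ r ar (2 * (l : ℤ)) n p).fderiv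
  simp only [lieBracket]
  rw [hbb, hcz]
  rw [show (((2 * (l : ℤ) + 1) / 2).toNat) = l by omega]
  simp only [ContinuousLinearMap.sub_apply, ContinuousLinearMap.add_apply,
    ContinuousLinearMap.smul_apply, ContinuousLinearMap.coe_sum', Finset.sum_apply,
    DA, DB, ContinuousLinearMap.prod_apply, DM_apply, A, B, Z, bbA, calZ]
  rw [show (((2 * (l : ℤ) + 1) / 2).toNat) = l by omega]
  simp only [Prod.ext_iff, Prod.fst_add, Prod.snd_add, Prod.fst_sub, Prod.snd_sub,
    Prod.smul_fst, Prod.smul_snd, Prod.fst_sum, Prod.snd_sum, smul_eq_mul]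
  constructor
  · push_cast
    norm_num [M_neg_left, M_neg_right, M_zero_zero]
    rw [show ((r:ℝ) + 1 + 1) / ((r:ℝ) + 2) = 1 by
      rw [show (r:ℝ) + 1 + 1 = (r:ℝ) + 2 by ring]
      exact div_self (by nlinarith [show (1:ℝ) ≤ (r:ℝ) from by exact_mod_cast hr])]
    rw [show ((n:ℝ) + (r:ℝ) * ((l:ℝ) + 1) + 1 + 1) / ((n:ℝ) + (r:ℝ) * ((l:ℝ) + 1) + 2) = 1 by
      rw [show (n:ℝ) + (r:ℝ) * ((l:ℝ) + 1) + 1 + 1 = (n:ℝ) + (r:ℝ) * ((l:ℝ) + 1) + 2 by ring]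
      exact div_self (by nlinarith [show (1:ℝ) ≤ (r:ℝ) from by exact_mod_cast hr,
        show (0:ℝ) ≤ (n:ℝ) from by exact_mod_cast hn, show (0:ℝ) ≤ (l:ℝ) from by positivity])]
    simp only [one_mul, mul_one]

    rw [show (if 1 ≤ l then ar ^ (l + 1) * ((n:ℝ) + (r:ℝ) * ((l:ℝ) + 1) + 2) * poch (2 * (l:ℝ) - 1) (-2) (l - 1)
        else ar ^ (l + 1) * ((n:ℝ) + (r:ℝ) * ((l:ℝ) + 1) + 2)) =
        ar ^ (l + 1) * ((n:ℝ) + (r:ℝ) * ((l:ℝ) + 1) + 2) * poch (2 * (l:ℝ) - 1) (-2) l by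
      rcases l with _ | k
      · norm_num [poch_zero]
      · rw [if_pos (by omega), show k + 1 - 1 = k from rfl, poch_succ]
        push_cast
        ring_nf]
    set FF : ℕ → ℝ := fun j => M (2 * (l:ℤ) - 2 * (j:ℤ)) (n + r * (j:ℤ) + 2 * (j:ℤ) - 2 * (l:ℤ) + r + 1) p with hFF
    set gg : ℕ → ℝ := fun j => ar ^ (j + 1) * poch (2 * (l:ℝ) - 1) (-2) j *
        ((n:ℝ) - 2 * (l:ℝ) + ((r:ℝ) + 2) * ((j:ℝ) + 1)) /
        poch ((n:ℝ) - 2 * (l:ℝ) + 1) ((r:ℝ) + 2) (j + 1) with hgg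
    have key : ar * (((r:ℝ) + 1) * M 0 r p) * (∑ x ∈ Finset.range l, ar ^ (x + 1) * ((n:ℝ) + (r:ℝ) * ((x:ℝ) + 1) + 2) * poch (2 * (l:ℝ) - 1) (-2) x / poch ((n:ℝ) - 2 * (l:ℝ) + 1) ((r:ℝ) + 2) (x + 2) * ((2 * (l:ℝ) - 2 * ((x:ℝ) + 1) + 1) / ((n:ℝ) + (r:ℝ) * ((x:ℝ) + 1) + 2) * M (2 * (l:ℤ) - 2 * ((x:ℤ) + 1)) (n + r * ((x:ℤ) + 1) - (2 * (l:ℤ) - 2 * ((x:ℤ) + 1)) + 1) p))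
        + (∑ x ∈ Finset.range l, ar ^ (x + 1) * ((n:ℝ) + (r:ℝ) * ((x:ℝ) + 1) + 2) * poch (2 * (l:ℝ) - 1) (-2) x / poch ((n:ℝ) - 2 * (l:ℝ) + 1) ((r:ℝ) + 2) (x + 2) * (((n:ℝ) + (r:ℝ) * ((x:ℝ) + 1) - (2 * (l:ℝ) - 2 * ((x:ℝ) + 1)) + 1) / ((n:ℝ) + (r:ℝ) * ((x:ℝ) + 1) + 2) * ((2 * (l:ℝ) - 2 * ((x:ℝ) + 1) + 1) * M (2 * (l:ℤ) - 2 * ((x:ℤ) + 1)) (n + r * ((x:ℤ) + 1) - (2 * (l:ℤ) - 2 * ((x:ℤ) + 1))) p * (ar * M 0 (r + 1) p) + -(((n:ℝ) + (r:ℝ) * ((x:ℝ) + 1) - (2 * (l:ℝ) - 2 * ((x:ℝ) + 1))) * M (2 * (l:ℤ) - 2 * ((x:ℤ) + 1) + 1) (n + r * ((x:ℤ) + 1) - (2 * (l:ℤ) - 2 * ((x:ℤ) + 1)) - 1) p * M 1 0 p))))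
        = gg l * FF l - gg 0 * FF 0 := by
      rw [Finset.mul_sum, ← Finset.sum_add_distrib, ← Finset.sum_range_sub (fun j => gg j * FF j) l]
      refine Finset.sum_congr rfl fun x hx => ?_
      have hxl : x < l := Finset.mem_range.mp hx
      have hrx : (0:ℤ) ≤ r * ((x:ℤ) + 1) := by positivity
      have e1 : M 0 r p * M (2 * (l:ℤ) - 2 * ((x:ℤ) + 1)) (n + r * ((x:ℤ) + 1) - (2 * (l:ℤ) - 2 * ((x:ℤ) + 1)) + 1) p = FF (x + 1) := by
        rw [M_mul_y r _ _ (by omega) (by omega) p, hFF]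
        exact M_congr _ _ _ _ (by push_cast; ring) (by push_cast; ring) p
      have e2 : M 0 (r + 1) p * M (2 * (l:ℤ) - 2 * ((x:ℤ) + 1)) (n + r * ((x:ℤ) + 1) - (2 * (l:ℤ) - 2 * ((x:ℤ) + 1))) p = FF (x + 1) := by
        rw [M_mul_y (r + 1) _ _ (by omega) (by omega) p, hFF]
        exact M_congr _ _ _ _ (by push_cast; ring) (by push_cast; ring) p
      have e3 : M 1 0 p * M (2 * (l:ℤ) - 2 * ((x:ℤ) + 1) + 1) (n + r * ((x:ℤ) + 1) - (2 * (l:ℤ) - 2 * ((x:ℤ) + 1)) - 1) p = FF x := by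
        rw [M_mul_x _ _ (by omega) p, hFF]
        exact M_congr _ _ _ _ (by push_cast; ring) (by push_cast; ring) p
      have hstep : ar * (((r:ℝ) + 1) * M 0 r p) * (ar ^ (x + 1) * ((n:ℝ) + (r:ℝ) * ((x:ℝ) + 1) + 2) * poch (2 * (l:ℝ) - 1) (-2) x / poch ((n:ℝ) - 2 * (l:ℝ) + 1) ((r:ℝ) + 2) (x + 2) * ((2 * (l:ℝ) - 2 * ((x:ℝ) + 1) + 1) / ((n:ℝ) + (r:ℝ) * ((x:ℝ) + 1) + 2) * M (2 * (l:ℤ) - 2 * ((x:ℤ) + 1)) (n + r * ((x:ℤ) + 1) - (2 * (l:ℤ) - 2 * ((x:ℤ) + 1)) + 1) p)) + (ar ^ (x + 1) * ((n:ℝ) + (r:ℝ) * ((x:ℝ) + 1) + 2) * poch (2 * (l:ℝ) - 1) (-2) x / poch ((n:ℝ) - 2 * (l:ℝ) + 1) ((r:ℝ) + 2) (x + 2) * (((n:ℝ) + (r:ℝ) * ((x:ℝ) + 1) - (2 * (l:ℝ) - 2 * ((x:ℝ) + 1)) + 1) / ((n:ℝ) + (r:ℝ) * ((x:ℝ) +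 1) + 2) * ((2 * (l:ℝ) - 2 * ((x:ℝ) + 1) + 1) * M (2 * (l:ℤ) - 2 * ((x:ℤ) + 1)) (n + r * ((x:ℤ) + 1) - (2 * (l:ℤ) - 2 * ((x:ℤ) + 1))) p * (ar * M 0 (r + 1) p) + -(((n:ℝ) + (r:ℝ) * ((x:ℝ) + 1) - (2 * (l:ℝ) - 2 * ((x:ℝ) + 1))) * M (2 * (l:ℤ) - 2 * ((x:ℤ) + 1) + 1) (n + r * ((x:ℤ) + 1) - (2 * (l:ℤ) - 2 * ((x:ℤ) + 1)) - 1) p * M 1 0 p))))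
          = (ar * ((r:ℝ) + 1) * (ar ^ (x + 1) * ((n:ℝ) + (r:ℝ) * ((x:ℝ) + 1) + 2) * poch (2 * (l:ℝ) - 1) (-2) x / poch ((n:ℝ) - 2 * (l:ℝ) + 1) ((r:ℝ) + 2) (x + 2)) * ((2 * (l:ℝ) - 2 * ((x:ℝ) + 1) + 1) / ((n:ℝ) + (r:ℝ) * ((x:ℝ) + 1) + 2))) * (M 0 r p * M (2 * (l:ℤ) - 2 * ((x:ℤ) + 1)) (n + r * ((x:ℤ) + 1) - (2 * (l:ℤ) - 2 * ((x:ℤ) + 1)) + 1) p) + (ar * (ar ^ (x + 1) * ((n:ℝ) + (r:ℝ) * ((x:ℝ) + 1) + 2) * poch (2 * (l:ℝ) - 1) (-2) x / poch ((n:ℝ) - 2 * (l:ℝ) + 1) ((r:ℝ) + 2) (x + 2)) * (((n:ℝ) + (r:ℝ) * ((x:ℝ) + 1) - (2 * (l:ℝ) - 2 * ((x:ℝ) + 1)) + 1) / ((n:ℝ) + (r:ℝ) * ((x:ℝ) + 1) + 2)) * (2 * (l:ℝ) - 2 * ((x:ℝ) + 1) + 1)) * (M 0 (r + 1) p * M (2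 * (l:ℤ) - 2 * ((x:ℤ) + 1)) (n + r * ((x:ℤ) + 1) - (2 * (l:ℤ) - 2 * ((x:ℤ) + 1))) p) + (-((ar ^ (x + 1) * ((n:ℝ) + (r:ℝ) * ((x:ℝ) + 1) + 2) * poch (2 * (l:ℝ) - 1) (-2) x / poch ((n:ℝ) - 2 * (l:ℝ) + 1) ((r:ℝ) + 2) (x + 2)) * (((n:ℝ) + (r:ℝ) * ((x:ℝ) + 1) - (2 * (l:ℝ) - 2 * ((x:ℝ) + 1)) + 1) / ((n:ℝ) + (r:ℝ) * ((x:ℝ) + 1) + 2)) * ((n:ℝ) + (r:ℝ) * ((x:ℝ) + 1) - (2 * (l:ℝ) - 2 * ((x:ℝ) + 1))))) * (M 1 0 p * M (2 * (l:ℤ) - 2 * ((x:ℤ) + 1) + 1) (n + r * ((x:ℤ) + 1) - (2 * (l:ℤ) - 2 * ((x:ℤ) + 1)) - 1) p) := by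
        ring
      rw [hstep, e1, e2, e3]
      have hrecQ : poch ((n:ℝ) - 2 * (l:ℝ) + 1) ((r:ℝ) + 2) (x + 2)
          = poch ((n:ℝ) - 2 * (l:ℝ) + 1) ((r:ℝ) + 2) (x + 1) *
            (((n:ℝ) - 2 * (l:ℝ) + 1) + ((x:ℝ) + 1) * ((r:ℝ) + 2)) := by
        rw [show x + 2 = (x + 1) + 1 from rfl, poch_succ]
        push_cast; ring_nf
      have c1 : ar * ((r:ℝ) + 1) * (ar ^ (x + 1) * ((n:ℝ) + (r:ℝ) * ((x:ℝ) + 1) + 2) * poch (2 * (l:ℝ) - 1) (-2) x / poch ((n:ℝ) - 2 * (l:ℝ) + 1) ((r:ℝ) + 2) (x + 2)) * ((2 * (l:ℝ) - 2 * ((x:ℝ) + 1) + 1) / ((n:ℝ) + (r:ℝ) * ((x:ℝ) + 1) + 2)) + ar * (ar ^ (x + 1) * ((n:ℝ) + (r:ℝ) * ((x:ℝ) + 1) + 2) * poch (2 * (l:ℝ) - 1) (-2) x / poch ((n:ℝ) - 2 * (l:ℝ) + 1) ((r:ℝ) + 2) (x + 2)) * (((n:ℝ) + (r:ℝ) * ((x:ℝ)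 + 1) - (2 * (l:ℝ) - 2 * ((x:ℝ) + 1)) + 1) / ((n:ℝ) + (r:ℝ) * ((x:ℝ) + 1) + 2)) * (2 * (l:ℝ) - 2 * ((x:ℝ) + 1) + 1)
          = gg (x + 1) := by
        rw [hgg]
        simp only []
        rw [show x + 1 + 1 = x + 2 from rfl, hrecQ, poch_succ (2 * (l:ℝ) - 1) (-2) x]
        have h1 := hQ (x + 1)
        have h2 := hfac x
        have h3 := hw x
        push_cast
        field_simp
        ring
      have c2 : -((ar ^ (x + 1) * ((n:ℝ) + (r:ℝ) * ((x:ℝ) + 1) + 2) * poch (2 * (l:ℝ) - 1) (-2) x / poch ((n:ℝ) - 2 * (l:ℝ) + 1) ((r:ℝ) + 2) (x + 2)) * (((n:ℝ) + (r:ℝ) * ((x:ℝ) + 1) - (2 * (l:ℝ) - 2 * ((x:ℝ) + 1)) + 1) / ((n:ℝ) + (r:ℝ) * ((x:ℝ) + 1) + 2)) * ((n:ℝ) + (r:ℝ) * ((x:ℝ) + 1) - (2 * (l:ℝ) - 2 * ((x:ℝ) + 1)))) = -(gg x) := by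
        rw [hgg]
        simp only []
        rw [hrecQ]
        have h1 := hQ (x + 1)
        have h2 := hfac x
        have h3 := hw x
        push_cast
        field_simp
        ring
      linear_combination FF (x + 1) * c1 + FF x * c2
    have E1 : M 0 (r + 1) p * M (2 * (l:ℤ)) (n - 2 * (l:ℤ)) p = FF 0 := by
      rw [M_mul_y (r + 1) _ _ (by omega) (by omega) p, hFF]
      exact M_congr _ _ _ _ (by push_cast; ring) (by push_cast; ring) p
    have E2 : M 0 r p * M (2 * (l:ℤ)) (n - 2 * (l:ℤ) + 1) p = FF 0 := by
      rw [M_mul_y r _ _ (by omega) (by omega) p, hFF]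
      exact M_congr _ _ _ _ (by push_cast; ring) (by push_cast; ring) p
    have E3 : M 1 0 p * M (2 * (l:ℤ) + 1) (n - 2 * (l:ℤ) - 1) p = M (2 * (l:ℤ) + 1 + 1) (n - 2 * (l:ℤ) - 1) p := by
      rw [M_mul_x _ _ (by omega) p]
    have E4 : FF l = M 0 (n + r * ((l:ℤ) + 1) + 1) p := by
      rw [hFF]
      exact M_congr _ _ _ _ (by push_cast; ring) (by push_cast; ring) p
    have cc1 : (ar - (2 * (l:ℝ) - (n:ℝ) - 1)⁻¹ * (((n:ℝ) - 2 * (l:ℝ) + 1) / ((n:ℝ) + 2)) * (2 * (l:ℝ) + 1) * ar - ((n:ℝ) + 2)⁻¹ * (2 * (l:ℝ) + 1) * ar) + (ar * ((r:ℝ) + 1) * (-((2 * (l:ℝ) - (n:ℝ) - 1)⁻¹ * ((2 * (l:ℝ) + 1) / ((n:ℝ) + 2))) + ((n:ℝ) + 2)⁻¹)) = gg 0 := by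
      rw [hgg]
      simp only []
      rw [poch_zero, poch_one]
      push_cast
      field_simp
      ring
    have cc2 : ((2 * (l:ℝ) - (n:ℝ) - 1)⁻¹ * (((n:ℝ) - 2 * (l:ℝ) + 1) / ((n:ℝ) + 2)) * ((n:ℝ) - 2 * (l:ℝ)) + ((n:ℝ) + 2)⁻¹ * ((n:ℝ) - 2 * (l:ℝ))) = (0:ℝ) := by
      field_simp
      ring
    have cc3 : gg l = ar ^ (l + 1) * ((n:ℝ) + (r:ℝ) * ((l:ℝ) + 1) + 2) * poch (2 * (l:ℝ) - 1) (-2) l / poch ((n:ℝ) - 2 * (l:ℝ) + 1) ((r:ℝ) + 2) (l + 1) := by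
      rw [hgg]
      simp only []
      have h1 := hQ (l + 1)
      field_simp
      ring
    linear_combination key + (ar - (2 * (l:ℝ) - (n:ℝ) - 1)⁻¹ * (((n:ℝ) - 2 * (l:ℝ) + 1) / ((n:ℝ) + 2)) * (2 * (l:ℝ) + 1) * ar - ((n:ℝ) + 2)⁻¹ * (2 * (l:ℝ) + 1) * ar) * E1 + (ar * ((r:ℝ) + 1) * (-((2 * (l:ℝ) - (n:ℝ) - 1)⁻¹ * ((2 * (l:ℝ) + 1) / ((n:ℝ) + 2))) + ((n:ℝ) + 2)⁻¹)) * E2 + ((2 * (l:ℝ) - (n:ℝ) - 1)⁻¹ * (((n:ℝ) - 2 * (l:ℝ) + 1) / ((n:ℝ) + 2)) * ((n:ℝ) - 2 * (l:ℝ)) + ((n:ℝ) + 2)⁻¹ * ((n:ℝ) - 2 * (l:ℝ))) * E3 + gg l * E4 + FF 0 * cc1 +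
      (M (2 * (l:ℤ) + 1 + 1) (n - 2 * (l:ℤ) - 1) p) * cc2 + (M 0 (n + r * ((l:ℤ) + 1) + 1) p) * cc3

  · push_cast
    norm_num [M_neg_left, M_neg_right, M_zero_zero]
    rw [show ((r:ℝ) + 1 + 1) / ((r:ℝ) + 2) = 1 by
      rw [show (r:ℝ) + 1 + 1 = (r:ℝ) + 2 by ring]
      exact div_self hne3]
    simp only [one_mul, mul_one]
    set SM : ℕ → ℝ := fun j => M (2 * (l:ℤ) - 2 * (j:ℤ) - 1) (n + r * (j:ℤ) + 2 * (j:ℤ) - 2 * (l:ℤ) + r + 2) p with hSM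
    set hh : ℕ → ℝ := fun j => -(ar ^ (j + 1) * poch (2 * (l:ℝ) - 1) (-2) j *
        (2 * (l:ℝ) - 2 * (j:ℝ)) / poch ((n:ℝ) - 2 * (l:ℝ) + 1) ((r:ℝ) + 2) (j + 1)) with hhh
    have key2 : (∑ x ∈ Finset.range l, ar ^ (x + 1) * ((n:ℝ) + (r:ℝ) * ((x:ℝ) + 1) + 2) * poch (2 * (l:ℝ) - 1) (-2) x / poch ((n:ℝ) - 2 * (l:ℝ) + 1) ((r:ℝ) + 2) (x + 2) * (((n:ℝ) + (r:ℝ) * ((x:ℝ) + 1) - (2 * (l:ℝ) - 2 * ((x:ℝ) + 1)) + 1) / ((n:ℝ) + (r:ℝ) * ((x:ℝ) + 1) + 2) * M (2 * (l:ℤ) - 2 * ((x:ℤ) + 1) + 1) (n + r * ((x:ℤ) + 1) - (2 * (l:ℤ) - 2 * ((x:ℤ) + 1))) p)) - (∑ x ∈ Finset.range l, ar ^ (x + 1) * ((n:ℝ) + (r:ℝ) * ((x:ℝ) + 1) + 2) * poch (2 * (l:ℝ) - 1) (-2) x / poch ((n:ℝ) - 2 * (l:ℝ) + 1) ((r:ℝ)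 + 2) (x + 2) * ((2 * (l:ℝ) - 2 * ((x:ℝ) + 1) + 1) / ((n:ℝ) + (r:ℝ) * ((x:ℝ) + 1) + 2) * ((2 * (l:ℝ) - 2 * ((x:ℝ) + 1)) * M (2 * (l:ℤ) - 2 * ((x:ℤ) + 1) - 1) (n + r * ((x:ℤ) + 1) - (2 * (l:ℤ) - 2 * ((x:ℤ) + 1)) + 1) p * (ar * M 0 (r + 1) p) + -(((n:ℝ) + (r:ℝ) * ((x:ℝ) + 1) - (2 * (l:ℝ) - 2 * ((x:ℝ) + 1)) + 1) * M (2 * (l:ℤ) - 2 * ((x:ℤ) + 1)) (n + r * ((x:ℤ) + 1) - (2 * (l:ℤ) - 2 * ((x:ℤ) + 1))) p * M 1 0 p))))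
        = hh l * SM l - hh 0 * SM 0 := by
      rw [← Finset.sum_sub_distrib, ← Finset.sum_range_sub (fun j => hh j * SM j) l]
      refine Finset.sum_congr rfl fun x hx => ?_
      have hxl : x < l := Finset.mem_range.mp hx
      have hrx : (0:ℤ) ≤ r * ((x:ℤ) + 1) := by positivity
      have e0 : M (2 * (l:ℤ) - 2 * ((x:ℤ) + 1) + 1) (n + r * ((x:ℤ) + 1) - (2 * (l:ℤ) - 2 * ((x:ℤ) + 1))) p = SM x := by
        rw [hSM]
        exact M_congr _ _ _ _ (by push_cast; ring) (by push_cast; ring) p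
      have e1 : M 0 (r + 1) p * M (2 * (l:ℤ) - 2 * ((x:ℤ) + 1) - 1) (n + r * ((x:ℤ) + 1) - (2 * (l:ℤ) - 2 * ((x:ℤ) + 1)) + 1) p = SM (x + 1) := by
        rw [M_mul_y (r + 1) _ _ (by omega) (by omega) p, hSM]
        exact M_congr _ _ _ _ (by push_cast; ring) (by push_cast; ring) p
      have e2 : M 1 0 p * M (2 * (l:ℤ) - 2 * ((x:ℤ) + 1)) (n + r * ((x:ℤ) + 1) - (2 * (l:ℤ) - 2 * ((x:ℤ) + 1))) p = SM x := by
        rw [M_mul_x _ _ (by omega) p, hSM]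
        exact M_congr _ _ _ _ (by push_cast; ring) (by push_cast; ring) p
      have hstep : ar ^ (x + 1) * ((n:ℝ) + (r:ℝ) * ((x:ℝ) + 1) + 2) * poch (2 * (l:ℝ) - 1) (-2) x / poch ((n:ℝ) - 2 * (l:ℝ) + 1) ((r:ℝ) + 2) (x + 2) * (((n:ℝ) + (r:ℝ) * ((x:ℝ) + 1) - (2 * (l:ℝ) - 2 * ((x:ℝ) + 1)) + 1) / ((n:ℝ) + (r:ℝ) * ((x:ℝ) + 1) + 2) * M (2 * (l:ℤ) - 2 * ((x:ℤ) + 1) + 1) (n + r * ((x:ℤ) + 1) - (2 * (l:ℤ) - 2 * ((x:ℤ) + 1))) p) - (ar ^ (x + 1) * ((n:ℝ) + (r:ℝ) * ((x:ℝ) + 1) + 2) * poch (2 * (l:ℝ) - 1) (-2) x / poch ((n:ℝ) - 2 * (l:ℝ) + 1) ((r:ℝ) + 2) (x + 2) * ((2 * (l:ℝ) - 2 * ((x:ℝ) + 1) + 1) / ((n:ℝ) + (r:ℝ) * ((x:ℝ) + 1) + 2) * ((2 * (l:ℝ) - 2 * ((x:ℝ) + 1)) * M (2 * (l:ℤ)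 - 2 * ((x:ℤ) + 1) - 1) (n + r * ((x:ℤ) + 1) - (2 * (l:ℤ) - 2 * ((x:ℤ) + 1)) + 1) p * (ar * M 0 (r + 1) p) + -(((n:ℝ) + (r:ℝ) * ((x:ℝ) + 1) - (2 * (l:ℝ) - 2 * ((x:ℝ) + 1)) + 1) * M (2 * (l:ℤ) - 2 * ((x:ℤ) + 1)) (n + r * ((x:ℤ) + 1) - (2 * (l:ℤ) - 2 * ((x:ℤ) + 1))) p * M 1 0 p))))
          = (-((ar ^ (x + 1) * ((n:ℝ) + (r:ℝ) * ((x:ℝ) + 1) + 2) * poch (2 * (l:ℝ) - 1) (-2) x / poch ((n:ℝ) - 2 * (l:ℝ) + 1) ((r:ℝ) + 2) (x + 2)) * ((2 * (l:ℝ) - 2 * ((x:ℝ) + 1) + 1) / ((n:ℝ) + (r:ℝ) * ((x:ℝ) + 1) + 2)) * (2 * (l:ℝ) - 2 * ((x:ℝ) + 1)) * ar)) * (M 0 (r + 1) p * M (2 * (l:ℤ) - 2 * ((x:ℤ) + 1) - 1) (n + r * ((x:ℤ) + 1) - (2 * (l:ℤ) - 2 * ((x:ℤ) + 1)) + 1)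 p) + ((ar ^ (x + 1) * ((n:ℝ) + (r:ℝ) * ((x:ℝ) + 1) + 2) * poch (2 * (l:ℝ) - 1) (-2) x / poch ((n:ℝ) - 2 * (l:ℝ) + 1) ((r:ℝ) + 2) (x + 2)) * ((2 * (l:ℝ) - 2 * ((x:ℝ) + 1) + 1) / ((n:ℝ) + (r:ℝ) * ((x:ℝ) + 1) + 2)) * ((n:ℝ) + (r:ℝ) * ((x:ℝ) + 1) - (2 * (l:ℝ) - 2 * ((x:ℝ) + 1)) + 1)) * (M 1 0 p * M (2 * (l:ℤ) - 2 * ((x:ℤ) + 1)) (n + r * ((x:ℤ) + 1) - (2 * (l:ℤ) - 2 * ((x:ℤ) + 1))) p) + ((ar ^ (x + 1) * ((n:ℝ) + (r:ℝ) * ((x:ℝ) + 1) + 2) * poch (2 * (l:ℝ) - 1) (-2) x / poch ((n:ℝ) - 2 * (l:ℝ) + 1) ((r:ℝ) + 2) (x + 2)) * (((n:ℝ) + (r:ℝ) * ((x:ℝ) + 1) - (2 * (l:ℝ) - 2 * ((x:ℝ) + 1)) + 1) / ((n:ℝ) + (r:ℝ) * ((x:ℝ) + 1) + 2))) * (M (2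 * (l:ℤ) - 2 * ((x:ℤ) + 1) + 1) (n + r * ((x:ℤ) + 1) - (2 * (l:ℤ) - 2 * ((x:ℤ) + 1))) p) := by
        ring
      rw [hstep, e0, e1, e2]
      have hrecQ : poch ((n:ℝ) - 2 * (l:ℝ) + 1) ((r:ℝ) + 2) (x + 2)
          = poch ((n:ℝ) - 2 * (l:ℝ) + 1) ((r:ℝ) + 2) (x + 1) *
            (((n:ℝ) - 2 * (l:ℝ) + 1) + ((x:ℝ) + 1) * ((r:ℝ) + 2)) := by
        rw [show x + 2 = (x + 1) + 1 from rfl, poch_succ]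
        push_cast; ring_nf
      have c1 : (-((ar ^ (x + 1) * ((n:ℝ) + (r:ℝ) * ((x:ℝ) + 1) + 2) * poch (2 * (l:ℝ) - 1) (-2) x / poch ((n:ℝ) - 2 * (l:ℝ) + 1) ((r:ℝ) + 2) (x + 2)) * ((2 * (l:ℝ) - 2 * ((x:ℝ) + 1) + 1) / ((n:ℝ) + (r:ℝ) * ((x:ℝ) + 1) + 2)) * (2 * (l:ℝ) - 2 * ((x:ℝ) + 1)) * ar)) = hh (x + 1) := by
        rw [hhh]
        simp only []
        rw [show x + 1 + 1 = x + 2 from rfl, hrecQ, poch_succ (2 * (l:ℝ) - 1) (-2) x]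
        have h1 := hQ (x + 1)
        have h2 := hfac x
        have h3 := hw x
        push_cast
        field_simp
        ring
      have c2 : ((ar ^ (x + 1) * ((n:ℝ) + (r:ℝ) * ((x:ℝ) + 1) + 2) * poch (2 * (l:ℝ) - 1) (-2) x / poch ((n:ℝ) - 2 * (l:ℝ) + 1) ((r:ℝ) + 2) (x + 2)) * ((2 * (l:ℝ) - 2 * ((x:ℝ) + 1) + 1) / ((n:ℝ) + (r:ℝ) * ((x:ℝ) + 1) + 2)) * ((n:ℝ) + (r:ℝ) * ((x:ℝ) + 1) - (2 * (l:ℝ) - 2 * ((x:ℝ) + 1)) + 1)) + ((ar ^ (x + 1) * ((n:ℝ) + (r:ℝ) * ((x:ℝ) + 1) + 2) * poch (2 * (l:ℝ) - 1) (-2) x / poch ((n:ℝ) - 2 * (l:ℝ) + 1) ((r:ℝ) + 2) (x + 2)) * (((n:ℝ) + (r:ℝ) * ((x:ℝ) + 1) - (2 * (l:ℝ) - 2 * ((x:ℝ) + 1)) + 1) / ((n:ℝ) + (r:ℝ) * ((x:ℝ) + 1) + 2))) = -(hh x) := by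
        rw [hhh]
        simp only []
        rw [hrecQ]
        have h1 := hQ (x + 1)
        have h2 := hfac x
        have h3 := hw x
        push_cast
        field_simp
        ring
      linear_combination SM (x + 1) * c1 + SM x * c2
    have E1 : M 0 (r + 1) p * M (2 * (l:ℤ) - 1) (n - 2 * (l:ℤ) + 1) p = SM 0 := by
      rw [M_mul_y (r + 1) _ _ (by omega) (by omega) p, hSM]
      exact M_congr _ _ _ _ (by push_cast; ring) (by push_cast; ring) p
    have E2 : M 1 0 p * M (2 * (l:ℤ)) (n - 2 * (l:ℤ)) p = M (2 * (l:ℤ) + 1) (n - 2 * (l:ℤ)) p := by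
      rw [M_mul_x _ _ (by omega) p]
    have E5 : SM l = 0 := by
      rw [hSM]
      exact M_neg_left _ _ (by omega) p
    have cc : (-((2 * (l:ℝ) - (n:ℝ) - 1)⁻¹ * (((n:ℝ) - 2 * (l:ℝ) + 1) / ((n:ℝ) + 2)) + ((n:ℝ) + 2)⁻¹)) + (-1 - (2 * (l:ℝ) - (n:ℝ) - 1)⁻¹ * ((2 * (l:ℝ) + 1) / ((n:ℝ) + 2)) * ((n:ℝ) - 2 * (l:ℝ) + 1) + ((n:ℝ) + 2)⁻¹ * ((n:ℝ) - 2 * (l:ℝ) + 1)) = 0 := by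
      field_simp
      ring
    have ccC : (ar * (2 * (l:ℝ)) * ((2 * (l:ℝ) - (n:ℝ) - 1)⁻¹ * ((2 * (l:ℝ) + 1) / ((n:ℝ) + 2)) - ((n:ℝ) + 2)⁻¹)) = hh 0 := by
      rw [hhh]
      simp only []
      rw [poch_zero, poch_one]
      field_simp
      ring
    linear_combination key2 + (-1 - (2 * (l:ℝ) - (n:ℝ) - 1)⁻¹ * ((2 * (l:ℝ) + 1) / ((n:ℝ) + 2)) * ((n:ℝ) - 2 * (l:ℝ) + 1) + ((n:ℝ) + 2)⁻¹ * ((n:ℝ) - 2 * (l:ℝ) + 1)) * E2 + (ar * (2 * (l:ℝ)) * ((2 * (l:ℝ) - (n:ℝ) - 1)⁻¹ * ((2 * (l:ℝ) + 1) / ((n:ℝ) + 2)) - ((n:ℝ) + 2)⁻¹)) * E1 + (M (2 * (l:ℤ) + 1) (n - 2 * (l:ℤ)) p) * cc + SM 0 * ccC + hh l * E5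
end

section
/- Let r ≥ 1 and l ≥ 1 be integers, a_r a real number, and set K := l(r+2). Then Z(0,K)·𝔸_r + [ (1/(K+2))·B(0,K) − (1/(K+1))·A(0,K), 𝔸_r ] = [ a_r·(l+1)(r+2)/(K+1) ]·A(−1, K+r), where · denotes the action of a scalar function on a vector field by pointwise multiplication and [·,·] is the Lie bracket of vector fields. -/
/-! With `K = l (r + 2)`, the field `(1/(K+2)) B(0,K) - (1/(K+1)) A(0,K)` collapses to the vertical
field `(0, y^(K+1)/(K+1))`, while `𝔸_r = (a_r y^(r+1), -x)`. The bracket of a vertical field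
`(0, f y)` with `(g y, -x)` is `(g' f, x f')`; here its second component `x y^K` cancels that of
`Z(0,K) 𝔸_r`, and the first components add up to `a_r (K + r + 2)/(K + 1) · y^(K+r+1)`, where
`K + r + 2 = (l + 1)(r + 2)` and `A(-1, K + r) = (y^(K+r+1), 0)`. -/

lemma M_apply_of_eq_natCast {a b : ℤ} {i j : ℕ} (ha : a = i) (hb : b = j) (p : ℝ × ℝ) :
    M a b p = p.1 ^ i * p.2 ^ j := by
  subst ha hb
  simp [M]

lemma M_neg_one_left (b : ℤ) (p : ℝ × ℝ) : M (-1) b p = 0 := by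
  simp [M]

lemma Z_zero_natCast (n : ℕ) : Z 0 n = fun p => p.2 ^ n := by
  funext p
  rw [Z, M_apply_of_eq_natCast (i := 0) (j := n) (by norm_num) (by ring), pow_zero, one_mul]

lemma A_neg_one_natCast (k : ℕ) : A (-1) k = fun p => (p.2 ^ (k + 1), 0) := by
  funext p
  have hk : (k : ℝ) + 2 ≠ 0 := by positivity
  simp only [A, M_neg_one_left]
  rw [M_apply_of_eq_natCast (i := 0) (j := k + 1) (by norm_num) (by push_cast; ring)]
  push_cast
  rw [mul_zero, Prod.mk.injEq, div_mul_eq_mul_div, div_eq_iff hk]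
  constructor <;> ring

lemma A_zero_natCast (n : ℕ) : A 0 n = fun p =>
    (((n : ℝ) + 1) / (n + 2) * (p.1 * p.2 ^ n), -(1 / ((n : ℝ) + 2)) * p.2 ^ (n + 1)) := by
  funext p
  simp only [A]
  rw [M_apply_of_eq_natCast (i := 1) (j := n) (by norm_num) (by ring),
    M_apply_of_eq_natCast (i := 0) (j := n + 1) (by norm_num) (by push_cast; ring)]
  simp

lemma B_zero_natCast (n : ℕ) : B 0 n = fun p => (p.1 * p.2 ^ n, p.2 ^ (n + 1)) := by
  funext p
  simp only [B]
  rw [M_apply_of_eq_natCast (i := 1) (j := n) (by norm_num) (by ring),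
    M_apply_of_eq_natCast (i := 0) (j := n + 1) (by norm_num) (by push_cast; ring)]
  simp

lemma bbA_natCast (m : ℕ) (ar : ℝ) : bbA m ar = fun p => (ar * p.2 ^ (m + 1), -p.1) := by
  funext p
  simp only [bbA, A_neg_one_natCast]
  simp only [A]
  rw [M_apply_of_eq_natCast (a := 1) (b := 0 - 1 + 1) (i := 1) (j := 0) (by norm_num) (by ring)]
  simp

lemma smul_B_sub_smul_A_zero (n : ℕ) :
    (fun q => (1 / ((n : ℝ) + 2)) • B 0 n q - (1 / ((n : ℝ) + 1)) • A 0 n q)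
      = fun q : ℝ × ℝ => (0, q.2 ^ (n + 1) / (n + 1)) := by
  funext q
  rw [B_zero_natCast, A_zero_natCast]
  simp only [Prod.smul_mk, Prod.mk_sub_mk, smul_eq_mul, Prod.mk.injEq]
  constructor <;> field_simp <;> ring

lemma lieBracket_vertical_snd_neg_fst {f g f' g' : ℝ → ℝ}
    (hf : ∀ y, HasDerivAt f (f' y) y) (hg : ∀ y, HasDerivAt g (g' y) y) :
    lieBracket (fun q : ℝ × ℝ => (0, f q.2)) (fun q => (g q.2, -q.1))
      = fun p => (g' p.2 * f p.2, p.1 * f' p.2) := by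
  funext p
  have hX : HasFDerivAt (fun q : ℝ × ℝ => ((0 : ℝ), f q.2)) _ p :=
    (hasFDerivAt_const (0 : ℝ) p).prodMk ((hf p.2).comp_hasFDerivAt (𝕜 := ℝ) p hasFDerivAt_snd)
  have hY : HasFDerivAt (fun q : ℝ × ℝ => (g q.2, -q.1)) _ p :=
    ((hg p.2).comp_hasFDerivAt p hasFDerivAt_snd).prodMk (hasFDerivAt_fst (𝕜 := ℝ)).neg
  simp only [lieBracket, hX.fderiv, hY.fderiv]
  simp [mul_comm]

/-- `Z(0,K)·𝔸_r + [(1/(K+2))B(0,K) - (1/(K+1))A(0,K), 𝔸_r]` with `K = l(r+2)`. -/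
theorem stmt10 (r l : ℤ) (ar : ℝ) (hr : 1 ≤ r) (hl : 1 ≤ l) :
    (fun p => Z 0 (l * (r + 2)) p • bbA r ar p
        + lieBracket
            (fun q => (1 / (((l * (r + 2) : ℤ) : ℝ) + 2)) • B 0 (l * (r + 2)) q
                - (1 / (((l * (r + 2) : ℤ) : ℝ) + 1)) • A 0 (l * (r + 2)) q)
            (bbA r ar) p)
      = fun p =>
        (ar * ((l : ℝ) + 1) * ((r : ℝ) + 2) / (((l * (r + 2) : ℤ) : ℝ) + 1)) •
          A (-1) (l * (r + 2) + r) p := by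
  lift r to ℕ using (by omega)
  lift l to ℕ using (by omega)
  obtain ⟨n, hn⟩ : ∃ n : ℕ, l * (r + 2) = n := ⟨_, rfl⟩
  have hK : (l : ℤ) * (r + 2) = n := by rw [← hn]; push_cast; ring
  have hKr : (l : ℤ) * (r + 2) + r = ((n + r : ℕ) : ℤ) := by push_cast; rw [hK]
  have hln : (l : ℝ) * (r + 2) = n := by exact_mod_cast hn
  have hf (y : ℝ) : HasDerivAt (fun y : ℝ => y ^ (n + 1) / (n + 1)) (y ^ n) y :=
    ((hasDerivAt_pow (n + 1) y).div_const _).congr_deriv (by push_cast; field_simp)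
  have hg (y : ℝ) : HasDerivAt (fun y => ar * y ^ (r + 1)) (ar * ((r + 1 : ℕ) * y ^ r)) y :=
    (hasDerivAt_pow (r + 1) y).const_mul ar
  rw [hKr, hK]
  simp only [Int.cast_natCast, Z_zero_natCast, bbA_natCast, A_neg_one_natCast,
    smul_B_sub_smul_A_zero, lieBracket_vertical_snd_neg_fst hf hg]
  funext p
  simp only [Prod.smul_mk, Prod.mk_add_mk, smul_eq_mul, Prod.mk.injEq]
  push_cast
  constructor
  · field_simp
    linear_combination -(ar * p.2 ^ (n + r + 1)) * hln
  · ring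
end
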